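/- Let 0 < β < 1, θ ∈ (1−β, 1], and let g: [a,b] → ℝ be Hölder continuous of order θ with constant K, i.e. |g(x) − g(y)| ≤ K|x − y|^θ for all x, y ∈ [a,b]. Define g_{b−}(x) = g(x) − g(b) and the right-sided fractional derivative (D^{1−β}_{b−} g_{b−})(x) = (1/Γ(β)) ( g_{b−}(x)/(b − x)^{1−β} + (1 − β) ∫_x^b (g_{b−}(x) − g_{b−}(u))/(u − x)^{2−β} du ) for x ∈ (a,b). Then for all x ∈ (a,b), |(D^{1−β}_{b−} g_{b−})(x)| ≤ (K/Γ(β)) (1 + (1 − β)/(θ + β − 1)) (b − a)^{θ+β−1}; in particular D^{1−β}_{b−} g_{b−} is bounded on (a,b). -/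
import Mathlib


open MeasureTheory Set

/-- The right-sided fractional derivative of `g_{b-}(x) = g(x) - g(b)`:
`(D^{1-β}_{b-} g_{b-})(x) = (1/Γ(β)) ( g_{b-}(x)/(b-x)^{1-β}
  + (1-β) ∫_x^b (g_{b-}(x) - g_{b-}(u))/(u-x)^{2-β} du )`. -/
noncomputable def fracDerivRight (β b : ℝ) (g : ℝ → ℝ) (x : ℝ) : ℝ :=
  (Real.Gamma β)⁻¹ *
    ((g x - g b) / (b - x) ^ (1 - β) +
      (1 - β) * ∫ u in Ioo x b, ((g x - g b) - (g u - g b)) / (u - x) ^ (2 - β))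

/-- For a `θ`-Hölder function `g` with `θ > 1-β`, the right-sided fractional
derivative `D^{1-β}_{b-} g_{b-}` is bounded on `(a,b)`. -/
theorem fracDerivRight_bound
    (a b β θ K : ℝ) (hab : a < b) (hβ : β ∈ Ioo (0:ℝ) 1)
    (hθ : θ ∈ Ioc (1 - β) 1) (hK : 0 < K)
    (g : ℝ → ℝ)
    (hg : ∀ x ∈ Icc a b, ∀ y ∈ Icc a b, |g x - g y| ≤ K * |x - y| ^ θ) :
    ∀ x ∈ Ioo a b,
      |fracDerivRight β b g x|
        ≤ K / Real.Gamma β * (1 + (1 - β) / (θ + β - 1)) * (b - a) ^ (θ + β - 1) := by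
  obtain ⟨hβ0, hβ1⟩ := hβ
  obtain ⟨hθ1, hθ2⟩ := hθ
  intro x hx
  obtain ⟨hax, hxb⟩ := hx
  have hσ0 : 0 < θ + β - 1 := by linarith
  have hΓ : 0 < Real.Gamma β := Real.Gamma_pos_of_pos hβ0
  have hbx : 0 < b - x := by linarith
  have hba : 0 < b - a := by linarith
  have hp1 : (-1 : ℝ) < θ + β - 2 := by linarith
  -- bound on the first term
  have hA : |(g x - g b) / (b - x) ^ (1 - β)| ≤ K * (b - x) ^ (θ + β - 1) := by
    rw [abs_div, abs_of_pos (Real.rpow_pos_of_pos hbx _),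
      div_le_iff₀ (Real.rpow_pos_of_pos hbx _)]
    calc |g x - g b| ≤ K * |x - b| ^ θ :=
          hg x ⟨hax.le, hxb.le⟩ b ⟨hab.le, le_refl b⟩
      _ = K * (b - x) ^ θ := by rw [abs_sub_comm, abs_of_pos hbx]
      _ = K * (b - x) ^ (θ + β - 1) * (b - x) ^ (1 - β) := by
          rw [mul_assoc, ← Real.rpow_add hbx]; ring_nf
  -- integrability of the dominating function
  open intervalIntegral in
  have hIntg : IntegrableOn (fun u => K * (u - x) ^ (θ + β - 2)) (Ioo x b) := by
    have h1 : IntervalIntegrable (fun t : ℝ => t ^ (θ + β - 2)) volume 0 (b - x) :=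
      intervalIntegral.intervalIntegrable_rpow' hp1
    have h2 := (h1.comp_sub_right x)
    simp only [zero_add, sub_add_cancel] at h2
    have h3 : IntegrableOn (fun u => (u - x) ^ (θ + β - 2)) (Ioo x b) :=
      ((intervalIntegrable_iff_integrableOn_Ioc_of_le hxb.le).mp h2).mono_set
        Ioo_subset_Ioc_self
    exact h3.const_mul K
  -- value of the dominating integral
  have hval : ∫ u in Ioo x b, K * (u - x) ^ (θ + β - 2)
      = K * ((b - x) ^ (θ + β - 1) / (θ + β - 1)) := by
    rw [← integral_Ioc_eq_integral_Ioo, ← intervalIntegral.integral_of_le hxb.le,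
      intervalIntegral.integral_const_mul]
    have := intervalIntegral.integral_comp_sub_right (a := x) (b := b)
      (fun t : ℝ => t ^ (θ + β - 2)) x
    rw [this, sub_self]
    rw [show (∫ t in (0:ℝ)..(b - x), t ^ (θ + β - 2))
        = ((b - x) ^ (θ + β - 2 + 1) - 0 ^ (θ + β - 2 + 1)) / (θ + β - 2 + 1) from
      integral_rpow (Or.inl hp1)]
    rw [Real.zero_rpow (by linarith : θ + β - 2 + 1 ≠ 0)]
    have : θ + β - 2 + 1 = θ + β - 1 := by ring
    rw [this, sub_zero]
  -- pointwise bound on the integrand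
  have hptw : ∀ u ∈ Ioo x b,
      ‖((g x - g b) - (g u - g b)) / (u - x) ^ (2 - β)‖
        ≤ K * (u - x) ^ (θ + β - 2) := by
    intro u hu
    obtain ⟨hxu, hub⟩ := hu
    have hux : 0 < u - x := by linarith
    have hpos := Real.rpow_pos_of_pos hux (2 - β)
    rw [Real.norm_eq_abs, abs_div, abs_of_pos hpos, div_le_iff₀ hpos]
    have : (g x - g b) - (g u - g b) = g x - g u := by ring
    rw [this]
    calc |g x - g u| ≤ K * |x - u| ^ θ :=
          hg x ⟨hax.le, hxb.le⟩ u ⟨by linarith, by linarith⟩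
      _ = K * (u - x) ^ θ := by rw [abs_sub_comm, abs_of_pos hux]
      _ = K * (u - x) ^ (θ + β - 2) * (u - x) ^ (2 - β) := by
          rw [mul_assoc, ← Real.rpow_add hux]; ring_nf
  -- bound on the integral
  have hI : |∫ u in Ioo x b, ((g x - g b) - (g u - g b)) / (u - x) ^ (2 - β)|
      ≤ K * ((b - x) ^ (θ + β - 1) / (θ + β - 1)) := by
    rw [← Real.norm_eq_abs, ← hval]
    refine norm_integral_le_of_norm_le hIntg ?_
    exact (ae_restrict_iff' measurableSet_Ioo).mpr (Filter.Eventually.of_forall hptw)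
  -- putting everything together
  have hbxa : (b - x) ^ (θ + β - 1) ≤ (b - a) ^ (θ + β - 1) :=
    Real.rpow_le_rpow hbx.le (by linarith) hσ0.le
  have h1β : (0:ℝ) ≤ 1 - β := by linarith
  unfold fracDerivRight
  rw [abs_mul, abs_of_pos (inv_pos.mpr hΓ)]
  have habs : |(g x - g b) / (b - x) ^ (1 - β) +
      (1 - β) * ∫ u in Ioo x b, ((g x - g b) - (g u - g b)) / (u - x) ^ (2 - β)|
      ≤ K * (b - x) ^ (θ + β - 1) +
        (1 - β) * (K * ((b - x) ^ (θ + β - 1) / (θ + β - 1))) := by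
    refine (abs_add_le _ _).trans (add_le_add hA ?_)
    rw [abs_mul, abs_of_nonneg h1β]
    exact mul_le_mul_of_nonneg_left hI h1β
  calc (Real.Gamma β)⁻¹ * |(g x - g b) / (b - x) ^ (1 - β) +
      (1 - β) * ∫ u in Ioo x b, ((g x - g b) - (g u - g b)) / (u - x) ^ (2 - β)|
      ≤ (Real.Gamma β)⁻¹ * (K * (b - x) ^ (θ + β - 1) +
        (1 - β) * (K * ((b - x) ^ (θ + β - 1) / (θ + β - 1)))) :=
        mul_le_mul_of_nonneg_left habs (inv_pos.mpr hΓ).le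
    _ = K / Real.Gamma β * (1 + (1 - β) / (θ + β - 1)) * (b - x) ^ (θ + β - 1) := by
        field_simp
    _ ≤ K / Real.Gamma β * (1 + (1 - β) / (θ + β - 1)) * (b - a) ^ (θ + β - 1) := by
        refine mul_le_mul_of_nonneg_left hbxa ?_
        have : 0 ≤ (1 - β) / (θ + β - 1) := div_nonneg h1β hσ0.le
        positivity
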